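/- arXiv:math/9904092 — 2 statements merged into one kernel-verified Lean document; each statement's English description precedes it below -/
import Mathlib

section
/- For τ in the upper half plane, define the Jacobi theta constants θ00(τ) = Σ_{n∈ℤ} exp(πiτ n²), θ10(τ) = Σ_{n∈ℤ} exp(πiτ (n+1/2)²), θ01(τ) = Σ_{n∈ℤ} (-1)^n exp(πiτ n²). Then θ00(τ)^4 = θ10(τ)^4 + θ01(τ)^4. -/
open Complex

noncomputable section JacobiAux

/-- The basic theta term. -/
def thetaTerm (τ x : ℂ) : ℂ := Complex.exp (Real.pi * I * τ * x ^ 2)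

lemma thetaTerm_mul_thetaTerm (τ : ℂ) {x y u v : ℂ} (h : x ^ 2 + y ^ 2 = 2 * u ^ 2 + 2 * v ^ 2) :
    thetaTerm τ x * thetaTerm τ y = thetaTerm (2 * τ) u * thetaTerm (2 * τ) v := by
  simp only [thetaTerm, ← Complex.exp_add]
  congr 1
  linear_combination (Real.pi : ℂ) * I * τ * h

lemma summable_thetaTerm {τ : ℂ} (hτ : 0 < τ.im) (c : ℂ) :
    Summable fun n : ℤ => thetaTerm τ ((n : ℂ) + c) := by
  have h := ((summable_jacobiTheta₂_term_iff (c * τ) τ).mpr hτ).mul_left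
    (Complex.exp (Real.pi * I * τ * c ^ 2))
  refine h.congr fun n => ?_
  simp only [jacobiTheta₂_term, thetaTerm, ← Complex.exp_add]
  congr 1
  ring

lemma summable_norm_thetaTerm {τ : ℂ} (hτ : 0 < τ.im) (c : ℂ) :
    Summable fun n : ℤ => ‖thetaTerm τ ((n : ℂ) + c)‖ :=
  summable_norm_iff.mpr (summable_thetaTerm hτ c)

/-- Product of two absolutely convergent sums over `ℤ`, as a `HasSum` over `ℤ × ℤ`. -/
lemma hasSum_mul_aux (f g : ℤ → ℂ) (hf : Summable fun n => ‖f n‖)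
    (hg : Summable fun n => ‖g n‖) :
    HasSum (fun q : ℤ × ℤ => f q.1 * g q.2) ((∑' n, f n) * ∑' n, g n) :=
  hf.of_norm.hasSum.mul hg.of_norm.hasSum ((hf.mul_norm hg).of_norm)

/-- Square of an absolutely convergent sum over `ℤ` as a double sum. -/
lemma tsum_sq_aux (f : ℤ → ℂ) (hf : Summable fun n => ‖f n‖) :
    (∑' n, f n) ^ 2 = ∑' q : ℤ × ℤ, f q.1 * f q.2 := by
  rw [sq]
  exact Summable.tsum_mul_tsum hf.of_norm hf.of_norm ((hf.mul_norm hf).of_norm)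

/-- Transfer a `HasSum` over `ℤ × ℤ` to a `HasSum` over a subset of `ℤ × ℤ`, along a
bijection onto that subset. -/
lemma hasSum_subset_of_bij {s : Set (ℤ × ℤ)} (f : ℤ × ℤ → ℂ) (ψ : ℤ × ℤ → ℤ × ℤ)
    (hmem : ∀ q, ψ q ∈ s) (hinj : Function.Injective ψ)
    (hsurj : ∀ p ∈ s, ∃ q, ψ q = p) {X : ℂ}
    (h : HasSum (fun q => f (ψ q)) X) :
    HasSum (f ∘ (Subtype.val : s → ℤ × ℤ)) X := by
  let e : (ℤ × ℤ) ≃ s := Equiv.ofBijective (fun q => ⟨ψ q, hmem q⟩)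
    ⟨fun a b hab => hinj (congrArg Subtype.val hab),
     fun p => (hsurj p.1 p.2).imp fun q hq => Subtype.ext hq⟩
  rw [← e.hasSum_iff]
  exact h

end JacobiAux

set_option maxHeartbeats 1000000 in
/-- Jacobi's identity `θ00(τ)⁴ = θ10(τ)⁴ + θ01(τ)⁴` among the three even
genus-1 theta constants, for `τ` in the upper half plane. -/
theorem jacobi_identity (τ : ℂ) (hτ : 0 < τ.im) :
    (∑' n : ℤ, Complex.exp (Real.pi * I * τ * (n : ℂ) ^ 2)) ^ 4
      = (∑' n : ℤ, Complex.exp (Real.pi * I * τ * ((n : ℂ) + 1 / 2) ^ 2)) ^ 4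
        + (∑' n : ℤ, (-1 : ℂ) ^ n * Complex.exp (Real.pi * I * τ * (n : ℂ) ^ 2)) ^ 4 := by
  have hσ : 0 < (2 * τ).im := by
    have : (2 * τ).im = 2 * τ.im := by simp
    rw [this]; linarith
  -- summability (in norm) of the basic series
  have hA0n : Summable fun n : ℤ => ‖thetaTerm τ (n : ℂ)‖ := by
    simpa using summable_norm_thetaTerm hτ 0
  have hAhn : Summable fun n : ℤ => ‖thetaTerm τ ((n : ℂ) + 1 / 2)‖ := summable_norm_thetaTerm hτ _
  have hS0n : Summable fun n : ℤ => ‖thetaTerm (2 * τ) (n : ℂ)‖ := by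
    simpa using summable_norm_thetaTerm hσ 0
  have hShn : Summable fun n : ℤ => ‖thetaTerm (2 * τ) ((n : ℂ) + 1 / 2)‖ :=
    summable_norm_thetaTerm hσ _
  have hB0n : Summable fun n : ℤ => ‖(-1 : ℂ) ^ n * thetaTerm τ (n : ℂ)‖ := by
    refine hA0n.congr fun n => ?_
    rw [norm_mul, norm_zpow, norm_neg, norm_one, one_zpow, one_mul]
  set A : ℂ := ∑' n : ℤ, thetaTerm (2 * τ) (n : ℂ) with hAdef
  set B : ℂ := ∑' n : ℤ, thetaTerm (2 * τ) ((n : ℂ) + 1 / 2) with hBdef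
  -- products over ℤ × ℤ
  have hAA : HasSum (fun q : ℤ × ℤ => thetaTerm (2 * τ) (q.1 : ℂ) * thetaTerm (2 * τ) (q.2 : ℂ))
      (A * A) :=
    hasSum_mul_aux (fun n : ℤ => thetaTerm (2 * τ) (n : ℂ))
      (fun n : ℤ => thetaTerm (2 * τ) (n : ℂ)) hS0n hS0n
  have hBB : HasSum (fun q : ℤ × ℤ =>
      thetaTerm (2 * τ) ((q.1 : ℂ) + 1 / 2) * thetaTerm (2 * τ) ((q.2 : ℂ) + 1 / 2))
      (B * B) :=
    hasSum_mul_aux (fun n : ℤ => thetaTerm (2 * τ) ((n : ℂ) + 1 / 2))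
      (fun n : ℤ => thetaTerm (2 * τ) ((n : ℂ) + 1 / 2)) hShn hShn
  have hAB : HasSum (fun q : ℤ × ℤ =>
      thetaTerm (2 * τ) (q.1 : ℂ) * thetaTerm (2 * τ) ((q.2 : ℂ) + 1 / 2))
      (A * B) :=
    hasSum_mul_aux (fun n : ℤ => thetaTerm (2 * τ) (n : ℂ))
      (fun n : ℤ => thetaTerm (2 * τ) ((n : ℂ) + 1 / 2)) hS0n hShn
  have hBA : HasSum (fun q : ℤ × ℤ =>
      thetaTerm (2 * τ) ((q.1 : ℂ) + 1 / 2) * thetaTerm (2 * τ) (q.2 : ℂ))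
      (B * A) :=
    hasSum_mul_aux (fun n : ℤ => thetaTerm (2 * τ) ((n : ℂ) + 1 / 2))
      (fun n : ℤ => thetaTerm (2 * τ) (n : ℂ)) hShn hS0n
  -- L1 : θ00(τ)² = A² + B²
  have L1 : (∑' n : ℤ, thetaTerm τ (n : ℂ)) ^ 2 = A * A + B * B := by
    have heven : HasSum ((fun p : ℤ × ℤ => thetaTerm τ (p.1 : ℂ) * thetaTerm τ (p.2 : ℂ)) ∘
        (Subtype.val : {p : ℤ × ℤ | (p.1 + p.2) % 2 = 0} → ℤ × ℤ)) (A * A) := by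
      refine hasSum_subset_of_bij _ (fun q => (q.1 + q.2, q.1 - q.2)) ?_ ?_ ?_ ?_
      · intro q; simp only [Set.mem_setOf_eq]; omega
      · intro a b h; simp only [Prod.mk.injEq, Prod.ext_iff] at h ⊢; omega
      · rintro ⟨m, n⟩ hp
        simp only [Set.mem_setOf_eq] at hp
        exact ⟨((m + n) / 2, (m - n) / 2), by simp only [Prod.mk.injEq]; omega⟩
      · refine hAA.congr_fun fun q => ?_
        exact thetaTerm_mul_thetaTerm τ (x := ((q.1 + q.2 : ℤ) : ℂ))
          (y := ((q.1 - q.2 : ℤ) : ℂ)) (u := (q.1 : ℂ)) (v := (q.2 : ℂ))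
          (by push_cast; ring)
    have hodd : HasSum ((fun p : ℤ × ℤ => thetaTerm τ (p.1 : ℂ) * thetaTerm τ (p.2 : ℂ)) ∘
        (Subtype.val : ({p : ℤ × ℤ | (p.1 + p.2) % 2 = 0}ᶜ : Set (ℤ × ℤ)) → ℤ × ℤ)) (B * B) := by
      refine hasSum_subset_of_bij _ (fun q => (q.1 + q.2 + 1, q.1 - q.2)) ?_ ?_ ?_ ?_
      · intro q; simp only [Set.mem_compl_iff, Set.mem_setOf_eq]; omega
      · intro a b h; simp only [Prod.mk.injEq, Prod.ext_iff] at h ⊢; omega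
      · rintro ⟨m, n⟩ hp
        simp only [Set.mem_compl_iff, Set.mem_setOf_eq] at hp
        exact ⟨((m + n - 1) / 2, (m - n - 1) / 2), by simp only [Prod.mk.injEq]; omega⟩
      · refine hBB.congr_fun fun q => ?_
        exact thetaTerm_mul_thetaTerm τ (x := ((q.1 + q.2 + 1 : ℤ) : ℂ))
          (y := ((q.1 - q.2 : ℤ) : ℂ)) (u := ((q.1 : ℂ) + 1 / 2)) (v := ((q.2 : ℂ) + 1 / 2))
          (by push_cast; ring)
    rw [tsum_sq_aux (fun n : ℤ => thetaTerm τ (n : ℂ)) hA0n]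
    exact (heven.add_compl hodd).tsum_eq
  -- L2 : θ01(τ)² = A² − B²
  have L2 : (∑' n : ℤ, (-1 : ℂ) ^ n * thetaTerm τ (n : ℂ)) ^ 2 = A * A - B * B := by
    have heven : HasSum ((fun p : ℤ × ℤ =>
        ((-1 : ℂ) ^ p.1 * thetaTerm τ (p.1 : ℂ)) * ((-1 : ℂ) ^ p.2 * thetaTerm τ (p.2 : ℂ))) ∘
        (Subtype.val : {p : ℤ × ℤ | (p.1 + p.2) % 2 = 0} → ℤ × ℤ)) (A * A) := by
      refine hasSum_subset_of_bij _ (fun q => (q.1 + q.2, q.1 - q.2)) ?_ ?_ ?_ ?_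
      · intro q; simp only [Set.mem_setOf_eq]; omega
      · intro a b h; simp only [Prod.mk.injEq, Prod.ext_iff] at h ⊢; omega
      · rintro ⟨m, n⟩ hp
        simp only [Set.mem_setOf_eq] at hp
        exact ⟨((m + n) / 2, (m - n) / 2), by simp only [Prod.mk.injEq]; omega⟩
      · refine hAA.congr_fun fun q => ?_
        have hs : ((-1 : ℂ) ^ (q.1 + q.2)) * ((-1 : ℂ) ^ (q.1 - q.2)) = 1 := by
          rw [← zpow_add₀ (by norm_num : (-1 : ℂ) ≠ 0)]
          rw [show q.1 + q.2 + (q.1 - q.2) = 2 * q.1 by ring]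
          rw [zpow_mul]
          norm_num
        have hT : thetaTerm τ ((q.1 + q.2 : ℤ) : ℂ) * thetaTerm τ ((q.1 - q.2 : ℤ) : ℂ)
            = thetaTerm (2 * τ) (q.1 : ℂ) * thetaTerm (2 * τ) (q.2 : ℂ) := by
          exact thetaTerm_mul_thetaTerm τ (x := ((q.1 + q.2 : ℤ) : ℂ))
            (y := ((q.1 - q.2 : ℤ) : ℂ)) (u := (q.1 : ℂ)) (v := (q.2 : ℂ)) (by push_cast; ring)
        show ((-1 : ℂ) ^ (q.1 + q.2) * thetaTerm τ ((q.1 + q.2 : ℤ) : ℂ)) *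
            ((-1 : ℂ) ^ (q.1 - q.2) * thetaTerm τ ((q.1 - q.2 : ℤ) : ℂ))
            = thetaTerm (2 * τ) (q.1 : ℂ) * thetaTerm (2 * τ) (q.2 : ℂ)
        linear_combination
          (thetaTerm τ ((q.1 + q.2 : ℤ) : ℂ) * thetaTerm τ ((q.1 - q.2 : ℤ) : ℂ)) * hs + hT
    have hodd : HasSum ((fun p : ℤ × ℤ =>
        ((-1 : ℂ) ^ p.1 * thetaTerm τ (p.1 : ℂ)) * ((-1 : ℂ) ^ p.2 * thetaTerm τ (p.2 : ℂ))) ∘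
        (Subtype.val : ({p : ℤ × ℤ | (p.1 + p.2) % 2 = 0}ᶜ : Set (ℤ × ℤ)) → ℤ × ℤ)) (-(B * B)) := by
      refine hasSum_subset_of_bij _ (fun q => (q.1 + q.2 + 1, q.1 - q.2)) ?_ ?_ ?_ ?_
      · intro q; simp only [Set.mem_compl_iff, Set.mem_setOf_eq]; omega
      · intro a b h; simp only [Prod.mk.injEq, Prod.ext_iff] at h ⊢; omega
      · rintro ⟨m, n⟩ hp
        simp only [Set.mem_compl_iff, Set.mem_setOf_eq] at hp
        exact ⟨((m + n - 1) / 2, (m - n - 1) / 2), by simp only [Prod.mk.injEq]; omega⟩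
      · refine hBB.neg.congr_fun fun q => ?_
        have hs : ((-1 : ℂ) ^ (q.1 + q.2 + 1)) * ((-1 : ℂ) ^ (q.1 - q.2)) = -1 := by
          rw [← zpow_add₀ (by norm_num : (-1 : ℂ) ≠ 0)]
          rw [show q.1 + q.2 + 1 + (q.1 - q.2) = 2 * q.1 + 1 by ring]
          rw [zpow_add₀ (by norm_num : (-1 : ℂ) ≠ 0), zpow_mul]
          norm_num
        have hT : thetaTerm τ ((q.1 + q.2 + 1 : ℤ) : ℂ) * thetaTerm τ ((q.1 - q.2 : ℤ) : ℂ)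
            = thetaTerm (2 * τ) ((q.1 : ℂ) + 1 / 2) * thetaTerm (2 * τ) ((q.2 : ℂ) + 1 / 2) := by
          exact thetaTerm_mul_thetaTerm τ (x := ((q.1 + q.2 + 1 : ℤ) : ℂ))
            (y := ((q.1 - q.2 : ℤ) : ℂ)) (u := ((q.1 : ℂ) + 1 / 2)) (v := ((q.2 : ℂ) + 1 / 2))
            (by push_cast; ring)
        show ((-1 : ℂ) ^ (q.1 + q.2 + 1) * thetaTerm τ ((q.1 + q.2 + 1 : ℤ) : ℂ)) *
            ((-1 : ℂ) ^ (q.1 - q.2) * thetaTerm τ ((q.1 - q.2 : ℤ) : ℂ))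
            = -(thetaTerm (2 * τ) ((q.1 : ℂ) + 1 / 2) * thetaTerm (2 * τ) ((q.2 : ℂ) + 1 / 2))
        linear_combination
          (thetaTerm τ ((q.1 + q.2 + 1 : ℤ) : ℂ) * thetaTerm τ ((q.1 - q.2 : ℤ) : ℂ)) * hs - hT
    rw [tsum_sq_aux (fun n : ℤ => (-1 : ℂ) ^ n * thetaTerm τ (n : ℂ)) hB0n]
    rw [(heven.add_compl hodd).tsum_eq]
    ring
  -- L3 : θ10(τ)² = 2AB
  have L3 : (∑' n : ℤ, thetaTerm τ ((n : ℂ) + 1 / 2)) ^ 2 = 2 * (A * B) := by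
    have heven : HasSum ((fun p : ℤ × ℤ =>
        thetaTerm τ ((p.1 : ℂ) + 1 / 2) * thetaTerm τ ((p.2 : ℂ) + 1 / 2)) ∘
        (Subtype.val : {p : ℤ × ℤ | (p.1 - p.2) % 2 = 0} → ℤ × ℤ)) (B * A) := by
      refine hasSum_subset_of_bij _ (fun q => (q.1 + q.2, q.1 - q.2)) ?_ ?_ ?_ ?_
      · intro q; simp only [Set.mem_setOf_eq]; omega
      · intro a b h; simp only [Prod.mk.injEq, Prod.ext_iff] at h ⊢; omega
      · rintro ⟨m, n⟩ hp
        simp only [Set.mem_setOf_eq] at hp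
        exact ⟨((m + n) / 2, (m - n) / 2), by simp only [Prod.mk.injEq]; omega⟩
      · refine hBA.congr_fun fun q => ?_
        exact thetaTerm_mul_thetaTerm τ (x := ((q.1 + q.2 : ℤ) : ℂ) + 1 / 2)
          (y := ((q.1 - q.2 : ℤ) : ℂ) + 1 / 2) (u := ((q.1 : ℂ) + 1 / 2)) (v := (q.2 : ℂ))
          (by push_cast; ring)
    have hodd : HasSum ((fun p : ℤ × ℤ =>
        thetaTerm τ ((p.1 : ℂ) + 1 / 2) * thetaTerm τ ((p.2 : ℂ) + 1 / 2)) ∘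
        (Subtype.val : ({p : ℤ × ℤ | (p.1 - p.2) % 2 = 0}ᶜ : Set (ℤ × ℤ)) → ℤ × ℤ)) (A * B) := by
      refine hasSum_subset_of_bij _ (fun q => (q.1 + q.2, q.1 - q.2 - 1)) ?_ ?_ ?_ ?_
      · intro q; simp only [Set.mem_compl_iff, Set.mem_setOf_eq]; omega
      · intro a b h; simp only [Prod.mk.injEq, Prod.ext_iff] at h ⊢; omega
      · rintro ⟨m, n⟩ hp
        simp only [Set.mem_compl_iff, Set.mem_setOf_eq] at hp
        exact ⟨((m + n + 1) / 2, (m - n - 1) / 2), by simp only [Prod.mk.injEq]; omega⟩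
      · refine hAB.congr_fun fun q => ?_
        exact thetaTerm_mul_thetaTerm τ (x := ((q.1 + q.2 : ℤ) : ℂ) + 1 / 2)
          (y := ((q.1 - q.2 - 1 : ℤ) : ℂ) + 1 / 2) (u := (q.1 : ℂ)) (v := ((q.2 : ℂ) + 1 / 2))
          (by push_cast; ring)
    rw [tsum_sq_aux (fun n : ℤ => thetaTerm τ ((n : ℂ) + 1 / 2)) hAhn]
    rw [(heven.add_compl hodd).tsum_eq]
    ring
  -- assemble
  have e1 : (∑' n : ℤ, Complex.exp (Real.pi * I * τ * (n : ℂ) ^ 2))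
      = ∑' n : ℤ, thetaTerm τ (n : ℂ) := rfl
  have e2 : (∑' n : ℤ, Complex.exp (Real.pi * I * τ * ((n : ℂ) + 1 / 2) ^ 2))
      = ∑' n : ℤ, thetaTerm τ ((n : ℂ) + 1 / 2) := rfl
  have e3 : (∑' n : ℤ, (-1 : ℂ) ^ n * Complex.exp (Real.pi * I * τ * (n : ℂ) ^ 2))
      = ∑' n : ℤ, (-1 : ℂ) ^ n * thetaTerm τ (n : ℂ) := rfl
  rw [e1, e2, e3, show (4 : ℕ) = 2 * 2 from rfl, pow_mul, pow_mul, pow_mul, L1, L2, L3]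
  ring
end

section
/- For τ in the upper half plane, with θ00, θ10, θ01 the Jacobi theta constants, one has the duplication-type identities θ10(τ/2)² = 2·θ00(τ)·θ10(τ) and θ00(τ/2)·θ01(τ/2) = θ01(τ)². -/
open Complex

noncomputable def theta00 (τ : ℂ) : ℂ := ∑' n : ℤ, Complex.exp (Real.pi * I * τ * (n : ℂ) ^ 2)

noncomputable def theta10 (τ : ℂ) : ℂ :=
  ∑' n : ℤ, Complex.exp (Real.pi * I * τ * ((n : ℂ) + 1 / 2) ^ 2)

noncomputable def theta01 (τ : ℂ) : ℂ :=
  ∑' n : ℤ, (-1 : ℂ) ^ n * Complex.exp (Real.pi * I * τ * (n : ℂ) ^ 2)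

/-!
Multiplying out, each left-hand side becomes a Gaussian sum over ℤ² at `τ / 2`. The substitution
`(m, n) = (a + b, a - b)` satisfies `m² + n² = 2 (a² + b²)`, so it turns Gaussian sums at `τ / 2`
into products of Gaussian sums at `τ`; it parametrizes the pairs with `m + n` even, and
`(a + b, a - b - 1)` those with `m + n` odd. In the first identity each half gives
`θ00(τ) θ10(τ)`. In the second, the even half gives `θ01(τ)²` and the odd half vanishes, because
the swap `(m, n) ↦ (n, m)` flips the sign `(-1)ⁿ` when `m + n` is odd.
-/

open Real

def checkerboardEquiv : ℤ × ℤ ⊕ ℤ × ℤ ≃ ℤ × ℤ where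
  toFun := Sum.elim (fun p => (p.1 + p.2, p.1 - p.2)) (fun p => (p.1 + p.2, p.1 - p.2 - 1))
  invFun p :=
    if (p.1 + p.2) % 2 = 0 then .inl ((p.1 + p.2) / 2, (p.1 - p.2) / 2)
    else .inr ((p.1 + p.2 + 1) / 2, (p.1 - p.2 - 1) / 2)
  left_inv := by
    rintro (⟨a, b⟩ | ⟨a, b⟩) <;> dsimp only [Sum.elim_inl, Sum.elim_inr]
    · rw [if_pos (by omega)]
      congr 2 <;> omega
    · rw [if_neg (by omega)]
      congr 2 <;> omega
  right_inv := by
    rintro ⟨m, n⟩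
    dsimp only
    split_ifs <;> dsimp only [Sum.elim_inl, Sum.elim_inr] <;> congr 1 <;> omega

theorem tsum_int_prod_eq_add_of_summable {M : Type*} [AddCommGroup M] [UniformSpace M]
    [IsUniformAddGroup M] [CompleteSpace M] [T2Space M] {F : ℤ × ℤ → M} (hF : Summable F) :
    ∑' p, F p = ∑' p : ℤ × ℤ, F (p.1 + p.2, p.1 - p.2) +
      ∑' p : ℤ × ℤ, F (p.1 + p.2, p.1 - p.2 - 1) := by
  have hFe : Summable (F ∘ checkerboardEquiv) := checkerboardEquiv.summable_iff.mpr hF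
  rw [← checkerboardEquiv.tsum_eq F]
  exact Summable.tsum_sum (f := F ∘ checkerboardEquiv) (hFe.comp_injective Sum.inl_injective)
    (hFe.comp_injective Sum.inr_injective)

theorem tsum_eq_zero_of_comp_equiv_eq_neg {α β : Type*} [AddCommGroup α] [TopologicalSpace α]
    [IsTopologicalAddGroup α] [T2Space α] [IsAddTorsionFree α] {f : β → α} (σ : β ≃ β)
    (hσ : ∀ x, f (σ x) = -f x) : ∑' x, f x = 0 := by
  refine self_eq_neg.mp ?_
  calc ∑' x, f x = ∑' x, f (σ x) := (σ.tsum_eq f).symm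
    _ = -∑' x, f x := by simp only [hσ, tsum_neg]

theorem summable_norm_cexp_mul_add_sq {τ : ℂ} (hτ : 0 < τ.im) (c : ℂ) :
    Summable fun n : ℤ => ‖cexp (π * I * τ * (n + c) ^ 2)‖ := by
  refine summable_norm_iff.mpr <|
    (((summable_jacobiTheta₂_term_iff (c * τ) τ).mpr hτ).mul_left
      (cexp (π * I * τ * c ^ 2))).congr fun n => ?_
  rw [jacobiTheta₂_term, ← Complex.exp_add]
  ring_nf

theorem summable_norm_cexp_mul_sq {τ : ℂ} (hτ : 0 < τ.im) :
    Summable fun n : ℤ => ‖cexp (π * I * τ * (n : ℂ) ^ 2)‖ := by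
  simpa using summable_norm_cexp_mul_add_sq hτ 0

theorem summable_norm_neg_one_zpow_mul_cexp_mul_sq {τ : ℂ} (hτ : 0 < τ.im) :
    Summable fun n : ℤ => ‖(-1 : ℂ) ^ n * cexp (π * I * τ * (n : ℂ) ^ 2)‖ := by
  simpa [norm_zpow] using summable_norm_cexp_mul_sq hτ

theorem cexp_half_add_sq_mul_cexp_half_sub_sq (τ x y : ℂ) :
    cexp (π * I * (τ / 2) * (x + y) ^ 2) * cexp (π * I * (τ / 2) * (x - y) ^ 2) =
      cexp (π * I * τ * x ^ 2) * cexp (π * I * τ * y ^ 2) := by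
  rw [← Complex.exp_add, ← Complex.exp_add]
  ring_nf

theorem theta10_half_sq {τ : ℂ} (hτ : 0 < τ.im) :
    theta10 (τ / 2) ^ 2 = 2 * theta00 τ * theta10 τ := by
  have h10 := summable_norm_cexp_mul_add_sq hτ (1 / 2)
  have h00 := summable_norm_cexp_mul_sq hτ
  have h10' := summable_norm_cexp_mul_add_sq (τ := τ / 2) (by simpa using hτ) (1 / 2)
  have hsum := summable_mul_of_summable_norm h10' h10'
  have hsplit := tsum_int_prod_eq_add_of_summable hsum
  rw [mul_assoc, two_mul]
  nth_rw 1 [mul_comm (theta00 τ)]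
  simp only [theta00, theta10]
  rw [sq, tsum_mul_tsum_of_summable_norm h10' h10', hsplit,
    tsum_mul_tsum_of_summable_norm h10 h00, tsum_mul_tsum_of_summable_norm h00 h10]
  congr 1
  · refine tsum_congr fun p => ?_
    rw [← cexp_half_add_sq_mul_cexp_half_sub_sq τ (p.1 + 1 / 2) p.2]
    push_cast
    ring_nf
  · refine tsum_congr fun p => ?_
    rw [← cexp_half_add_sq_mul_cexp_half_sub_sq τ p.1 (p.2 + 1 / 2)]
    push_cast
    ring_nf

theorem neg_one_zpow_sub {K : Type*} [DivisionRing K] (a b : ℤ) :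
    (-1 : K) ^ (a - b) = (-1) ^ a * (-1) ^ b := by
  rw [sub_eq_add_neg, zpow_add₀ (neg_ne_zero.mpr one_ne_zero), zpow_neg, ← inv_zpow, inv_neg_one]

theorem tsum_mul_neg_one_zpow_mul_eq_zero {K : Type*} [Field K] [CharZero K] [TopologicalSpace K]
    [IsTopologicalAddGroup K] [T2Space K] (f : ℤ → K) :
    ∑' p : ℤ × ℤ, f (p.1 + p.2) * ((-1) ^ (p.1 - p.2 - 1) * f (p.1 - p.2 - 1)) = 0 := by
  -- `(a, b) ↦ (a, -1 - b)` swaps `a + b` and `a - b - 1`.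
  refine tsum_eq_zero_of_comp_equiv_eq_neg ((Equiv.refl ℤ).prodCongr (Equiv.subLeft (-1)))
    fun ⟨a, b⟩ => ?_
  have hsign : (-1 : K) ^ (a + b) = -(-1) ^ (a - b - 1) := by
    rw [show a + b = a - b - 1 + (2 * b + 1) by ring, zpow_add₀ (neg_ne_zero.mpr one_ne_zero),
      Odd.neg_one_zpow ⟨b, rfl⟩, mul_neg_one]
  simp only [Equiv.prodCongr_apply, Equiv.coe_refl, Prod.map, id, Equiv.subLeft_apply]
  rw [show a + (-1 - b) = a - b - 1 by ring, show a - (-1 - b) - 1 = a + b by ring, hsign]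
  ring

theorem theta00_half_mul_theta01_half {τ : ℂ} (hτ : 0 < τ.im) :
    theta00 (τ / 2) * theta01 (τ / 2) = theta01 τ ^ 2 := by
  have h01 := summable_norm_neg_one_zpow_mul_cexp_mul_sq hτ
  have h00' := summable_norm_cexp_mul_sq (τ := τ / 2) (by simpa using hτ)
  have h01' := summable_norm_neg_one_zpow_mul_cexp_mul_sq (τ := τ / 2) (by simpa using hτ)
  have hsum := summable_mul_of_summable_norm h00' h01'
  have hsplit := tsum_int_prod_eq_add_of_summable hsum
  rw [← add_zero (theta01 τ ^ 2)]
  simp only [theta00, theta01]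
  rw [tsum_mul_tsum_of_summable_norm h00' h01', hsplit, sq, tsum_mul_tsum_of_summable_norm h01 h01]
  congr 1
  · refine tsum_congr fun p => ?_
    have hexp := cexp_half_add_sq_mul_cexp_half_sub_sq τ p.1 p.2
    push_cast
    rw [neg_one_zpow_sub]
    linear_combination ((-1 : ℂ) ^ p.1 * (-1) ^ p.2) * hexp
  · exact tsum_mul_neg_one_zpow_mul_eq_zero fun n : ℤ => cexp (π * I * (τ / 2) * (n : ℂ) ^ 2)

/-- Duplication-type identities for Jacobi theta constants:
`θ10(τ/2)² = 2 θ00(τ) θ10(τ)` and `θ00(τ/2) θ01(τ/2) = θ01(τ)²`. -/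
theorem theta_duplication (τ : ℂ) (hτ : 0 < τ.im) :
    theta10 (τ / 2) ^ 2 = 2 * theta00 τ * theta10 τ ∧
    theta00 (τ / 2) * theta01 (τ / 2) = theta01 τ ^ 2 := by
  exact ⟨theta10_half_sq hτ, theta00_half_mul_theta01_half hτ⟩
end
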